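/- arXiv:1208.3453 — 2 statements merged into one kernel-verified Lean document; each statement's English description precedes it below -/
import Mathlib

section
/- Let N be a positive integer whose odd part is squarefree and whose even part divides 8 (i.e., N = 2^α·m with 0 ≤ α ≤ 3 and m odd and squarefree). Let e be a positive divisor of N, k an integer, and f a modular form of weight k for Γ₀(N). Set h = N / gcd(e², N) and define g = Σ_{j=0}^{h−1} f ∣[k] (U_e·T^j). Then g ∣[k] δ = g for every δ ∈ Γ₀(N). -/
/-!
For `δ = [[a, b], [c, d]] ∈ Γ₀(N)` the lower-left entry of `U_e T^i δ (U_e T^j)⁻¹` is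
`e (e (a j - d i - b) + a - d)` modulo `c`, so whenever `N` divides this number the `i`-th summand
of `g`, slashed by `δ`, is the `j`-th summand. Write `G = gcd(e, N/e)`, so that
`gcd(e², N) = e G` and `h = N / (e G)`. As `G² ∣ N`, the shape of `N` forces `G ∣ 2`, hence
`G ∣ a - d`, and the divisibility becomes a linear congruence modulo `h` in `j`, whose coefficient
`(e / G) a` is a unit mod `h`. Its solutions `i ↦ j` form an affine permutation of `ℤ/h`, which
permutes the summands of `g`.
-/

open ModularForm UpperHalfPlane Matrix CongruenceSubgroup
open scoped MatrixGroups ModularForm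

/-- The matrix `U_e = [[1,0],[e,1]]` in `SL(2, ℤ)`. -/
def Ue (e : ℤ) : SL(2, ℤ) :=
  ⟨!![1, 0; e, 1], by norm_num [Matrix.det_fin_two_of]⟩

open Finset ModularGroup

lemma dvd_two_of_mul_self_dvd {α m x : ℕ} (hα : α ≤ 3) (hm : Odd m) (hsf : Squarefree m)
    (hx : x * x ∣ 2 ^ α * m) : x ∣ 2 := by
  have hcop : Nat.Coprime (2 ^ α) m := (Nat.coprime_two_left.mpr hm).pow_left α
  have hxm : Nat.Coprime x m := by
    have hd : Nat.Coprime (2 ^ α) (Nat.gcd x m) := hcop.coprime_dvd_right (Nat.gcd_dvd_right x m)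
    have hdd : Nat.gcd x m * Nat.gcd x m ∣ m := (hd.mul_right hd).symm.dvd_of_dvd_mul_left
      ((mul_dvd_mul (Nat.gcd_dvd_left x m) (Nat.gcd_dvd_left x m)).trans hx)
    exact Nat.isUnit_iff.mp (hsf _ hdd)
  have hx2 : x * x ∣ 2 ^ α := (hxm.mul_left hxm).dvd_of_dvd_mul_right hx
  obtain ⟨β, -, rfl⟩ := (Nat.dvd_prime_pow Nat.prime_two).mp ((dvd_mul_right _ _).trans hx2)
  rw [← pow_add, Nat.pow_dvd_pow_iff_le_right one_lt_two] at hx2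
  exact (pow_dvd_pow 2 (by omega : β ≤ 1)).trans (pow_one 2).dvd

lemma gcd_sq_eq_mul_gcd_div {N e : ℕ} (heN : e ∣ N) :
    Nat.gcd (e ^ 2) N = e * Nat.gcd e (N / e) := by
  conv_lhs => rw [sq, ← Nat.mul_div_cancel' heN]
  exact Nat.gcd_mul_left e e (N / e)

lemma Gamma0_dvd_diag_sub_of_dvd_two {N q : ℕ} (hqN : q ∣ N) (hq2 : q ∣ 2) {δ : SL(2, ℤ)}
    (hδ : δ ∈ Gamma0 N) : (q : ℤ) ∣ δ 0 0 - δ 1 1 := by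
  rcases (Nat.dvd_prime Nat.prime_two).mp hq2 with rfl | rfl
  · simp
  have hc : (2 : ℤ) ∣ δ 1 0 := (Int.natCast_dvd_natCast.mpr hqN).trans
    ((ZMod.intCast_zmod_eq_zero_iff_dvd _ _).mp (Gamma0_mem.mp hδ))
  have hdet : δ 0 0 * δ 1 1 - δ 0 1 * δ 1 0 = 1 := by rw [← det_fin_two]; exact δ.det_coe
  obtain ⟨c, hc⟩ := hc
  have hodd : Odd (δ 0 0 * δ 1 1) := ⟨δ 0 1 * c, by linear_combination hdet + δ 0 1 * hc⟩
  rw [Int.odd_mul] at hodd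
  exact_mod_cast (hodd.1.sub_odd hodd.2).two_dvd

lemma Finset.sum_range_eq_sum_zmod_val {M : Type*} [AddCommMonoid M] (n : ℕ) [NeZero n]
    (F : ℕ → M) : ∑ j ∈ range n, F j = ∑ x : ZMod n, F x.val := by
  obtain ⟨n, rfl⟩ := Nat.exists_eq_succ_of_ne_zero (NeZero.ne n)
  exact (Fin.sum_univ_eq_sum_range F _).symm

lemma Ue_mul_T_pow_coe (e : ℤ) (n : ℕ) :
    ((Ue e * T ^ n : SL(2, ℤ)) : Matrix (Fin 2) (Fin 2) ℤ) =
      !![1, (n : ℤ); e, e * n + 1] := by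
  rw [Matrix.SpecialLinearGroup.coe_mul, ← zpow_natCast, coe_T_zpow]
  simp [Ue]

lemma Ue_mul_T_pow_mul_mul_inv_mem_Gamma0 {N : ℕ} {δ : SL(2, ℤ)} (hδ : δ ∈ Gamma0 N)
    (e : ℤ) (i j : ℕ)
    (h : (N : ℤ) ∣ e * (e * (δ 0 0 * j - δ 1 1 * i - δ 0 1) + δ 0 0 - δ 1 1)) :
    Ue e * T ^ i * δ * (Ue e * T ^ j)⁻¹ ∈ Gamma0 N := by
  rw [Gamma0_mem, ZMod.intCast_zmod_eq_zero_iff_dvd] at hδ ⊢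
  have hentry : (Ue e * T ^ i * δ * (Ue e * T ^ j)⁻¹) 1 0 =
      e * (e * (δ 0 0 * j - δ 1 1 * i - δ 0 1) + δ 0 0 - δ 1 1) +
        δ 1 0 * ((e * i + 1) * (e * j + 1)) := by
    rw [Matrix.SpecialLinearGroup.coe_mul, Matrix.SpecialLinearGroup.coe_mul,
      Matrix.SpecialLinearGroup.coe_inv, Ue_mul_T_pow_coe, Ue_mul_T_pow_coe, adjugate_fin_two,
      eta_fin_two (δ : Matrix (Fin 2) (Fin 2) ℤ)]
    simp
    ring
  rw [hentry]
  exact dvd_add h (dvd_mul_of_dvd_left hδ _)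

lemma slash_slash_eq_of_mul_mul_inv_mem {Γ : Subgroup SL(2, ℤ)} {k : ℤ} {F : Type*}
    [FunLike F ℍ ℂ] [SlashInvariantFormClass F Γ k] (f : F) {A δ B : SL(2, ℤ)}
    (h : A * δ * B⁻¹ ∈ Γ) : (⇑f ∣[k] A) ∣[k] δ = ⇑f ∣[k] B := by
  have h' : ((A * δ * B⁻¹ : SL(2, ℤ)) : GL (Fin 2) ℝ) ∈
      Subgroup.map (SpecialLinearGroup.mapGL ℝ) Γ :=
    Subgroup.mem_map_of_mem _ h
  rw [← SlashAction.slash_mul, show A * δ = A * δ * B⁻¹ * B by group, SlashAction.slash_mul,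
    SL_slash (f := ⇑f) (A * δ * B⁻¹), SlashInvariantForm.slash_action_eqn f _ h']

lemma exists_bijective_zmod_of_gcd_sq_dvd {N e : ℕ} [NeZero (N / Nat.gcd (e ^ 2) N)]
    {a b c d : ℤ} (hc : (N : ℤ) ∣ c) (hdet : a * d - b * c = 1)
    (hdiag : (Nat.gcd (e ^ 2) N : ℤ) ∣ e * (a - d)) :
    ∃ σ : ZMod (N / Nat.gcd (e ^ 2) N) → ZMod (N / Nat.gcd (e ^ 2) N), σ.Bijective ∧
      ∀ x, (N : ℤ) ∣ e * (e * (a * (σ x).val - d * x.val - b) + a - d) := by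
  set g := Nat.gcd (e ^ 2) N
  set h := N / g
  have hg : 0 < g := Nat.gcd_pos_of_pos_right _ <| Nat.pos_of_ne_zero fun hN ↦
    NeZero.ne h (by simp [h, hN])
  have hhN : (h : ℤ) * g = N := by exact_mod_cast Nat.div_mul_cancel (Nat.gcd_dvd_right _ _)
  have heg : ((e ^ 2 / g : ℕ) : ℤ) * g = e ^ 2 := by
    exact_mod_cast Nat.div_mul_cancel (Nat.gcd_dvd_left _ _)
  have hcop : Nat.Coprime (e ^ 2 / g) h := Nat.coprime_div_gcd_div_gcd hg
  generalize e ^ 2 / g = E at heg hcop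
  obtain ⟨u, hu⟩ := ((ZMod.isUnit_iff_coprime E h).mpr hcop).exists_right_inv
  have had : (a : ZMod h) * d = 1 := by
    have hc' : (c : ZMod h) = 0 := (ZMod.intCast_zmod_eq_zero_iff_dvd _ _).mpr
      ((Dvd.intro _ hhN).trans hc)
    simpa [hc'] using congrArg (Int.cast : ℤ → ZMod h) hdet
  obtain ⟨s, hs⟩ := hdiag
  -- solves `E (a y - d x - b) + s = 0` for `y`, using `a⁻¹ = d` and `u = E⁻¹` in `ZMod h`
  refine ⟨fun x ↦ d * (d * x + b - u * s), Finite.injective_iff_bijective.mp fun x y hxy ↦ ?_,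
    fun x ↦ ?_⟩
  · linear_combination a * a * hxy - (x - y) * (a * d + 1) * had
  set X := a * ((d * (d * x + b - u * s) : ZMod h).val : ℤ) - d * x.val - b
  obtain ⟨q, hq⟩ : (h : ℤ) ∣ E * X + s := by
    rw [← ZMod.intCast_zmod_eq_zero_iff_dvd]
    simp only [X, Int.cast_add, Int.cast_mul, Int.cast_sub, Int.cast_natCast,
      ZMod.natCast_zmod_val]
    linear_combination (E * d * x + E * b - E * u * s) * had - s * hu
  exact ⟨q, by linear_combination hs + g * hq + q * hhN - X * heg⟩

theorem sum_slash_Ue_mul_T_pow_slash_eq_self {N e : ℕ} (heN : e ∣ N)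
    (hG : Nat.gcd e (N / e) ∣ 2) {k : ℤ} {F : Type*} [FunLike F ℍ ℂ]
    [SlashInvariantFormClass F (Gamma0 N) k] (f : F) {δ : SL(2, ℤ)} (hδ : δ ∈ Gamma0 N) :
    (∑ j ∈ range (N / Nat.gcd (e ^ 2) N), ⇑f ∣[k] (Ue e * T ^ j)) ∣[k] δ =
      ∑ j ∈ range (N / Nat.gcd (e ^ 2) N), ⇑f ∣[k] (Ue e * T ^ j) := by
  rcases eq_zero_or_neZero (N / Nat.gcd (e ^ 2) N) with h0 | _
  · simp [h0]
  have hdiag : (Nat.gcd (e ^ 2) N : ℤ) ∣ e * (δ 0 0 - δ 1 1) := by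
    rw [gcd_sq_eq_mul_gcd_div heN, Nat.cast_mul]
    exact mul_dvd_mul_left _ <|
      Gamma0_dvd_diag_sub_of_dvd_two ((Nat.gcd_dvd_left _ _).trans heN) hG hδ
  have hdet : δ 0 0 * δ 1 1 - δ 0 1 * δ 1 0 = 1 := by rw [← det_fin_two]; exact δ.det_coe
  obtain ⟨σ, hσ, hdvd⟩ := exists_bijective_zmod_of_gcd_sq_dvd
    ((ZMod.intCast_zmod_eq_zero_iff_dvd _ _).mp (Gamma0_mem.mp hδ)) hdet hdiag
  rw [sum_range_eq_sum_zmod_val, SlashAction.sum_slash]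
  exact Fintype.sum_bijective σ hσ _ _ fun x ↦ slash_slash_eq_of_mul_mul_inv_mem f
    (Ue_mul_T_pow_mul_mul_inv_mem_Gamma0 hδ e _ _ (hdvd x))

theorem stmt_2_general (N : ℕ) (α m : ℕ) (hα : α ≤ 3) (hm : Odd m)
    (hsf : Squarefree m) (hNam : N = 2 ^ α * m)
    (e : ℕ) (heN : e ∣ N) (k : ℤ)
    (f : ModularForm (Gamma0 N) k) (g : ℍ → ℂ)
    (hg : g = ∑ j ∈ Finset.range (N / Nat.gcd (e ^ 2) N),
      (⇑f) ∣[k] (Ue (e : ℤ) * ModularGroup.T ^ j)) :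
    ∀ δ ∈ Gamma0 N, g ∣[k] δ = g := by
  intro δ hδ
  have hGG : Nat.gcd e (N / e) * Nat.gcd e (N / e) ∣ N := by
    simpa only [Nat.mul_div_cancel' heN] using
      mul_dvd_mul (Nat.gcd_dvd_left e (N / e)) (Nat.gcd_dvd_right e (N / e))
  have hG : Nat.gcd e (N / e) ∣ 2 := dvd_two_of_mul_self_dvd hα hm hsf (hNam ▸ hGG)
  subst hg
  exact sum_slash_Ue_mul_T_pow_slash_eq_self heN hG f hδ

/-- Let `N = 2^α·m` be a positive integer with `α ≤ 3` and `m` odd and squarefree.  Let `e` be a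
positive divisor of `N`, `k` an integer, and `f` a modular form of weight `k` for `Γ₀(N)`.  Set
`h = N / gcd(e², N)` and `g = ∑_{j=0}^{h-1} f ∣[k] (U_e T^j)`.  Then `g ∣[k] δ = g` for every
`δ ∈ Γ₀(N)`. -/
theorem stmt_2 (N : ℕ) (hN : 0 < N) (α m : ℕ) (hα : α ≤ 3) (hm : Odd m)
    (hsf : Squarefree m) (hNam : N = 2 ^ α * m)
    (e : ℕ) (he : 0 < e) (heN : e ∣ N) (k : ℤ)
    (f : ModularForm (Gamma0 N) k) (g : ℍ → ℂ)
    (hg : g = ∑ j ∈ Finset.range (N / Nat.gcd (e ^ 2) N),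
      (⇑f) ∣[k] (Ue (e : ℤ) * ModularGroup.T ^ j)) :
    ∀ δ ∈ Gamma0 N, g ∣[k] δ = g :=
  stmt_2_general N α m hα hm hsf hNam e heN k f g hg
end

section
/- Let N be a positive integer, e a positive divisor of N, and δ = [[a,b],[c,d]] ∈ Γ₀(N) with a ≡ d (mod gcd(e, N/e)). Then for every integer n there exists an integer n' such that U_e · T^n · δ · T^{−n'} · U_e^{−1} belongs to Γ₀(N). -/
/-!
Conjugating `γ = [[A, B], [C, D]]` by `U_e` gives lower-left entry `C + e (A - D) - e² B`. For
`γ = T^n δ T^(-m)` and `N ∣ c` this is `e (e a m - t)` modulo `N`, where `t = e (b + n d) + (d - a)`.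
Writing `N = e M`, it remains to solve the congruence `e a m ≡ t (mod M)`. As `a` is prime to `c`,
hence to `M`, this is solvable once `gcd(e, M) ∣ t`, and `gcd(e, M)` divides both `e` and `d - a`.
-/

open Matrix CongruenceSubgroup
open scoped MatrixGroups

local notation:1024 "↑ₘ" A:1024 => ((A : SL(2, ℤ)) : Matrix (Fin 2) (Fin 2) ℤ)

lemma coe_Ue (e : ℤ) : ↑ₘ(Ue e) = !![1, 0; e, 1] := rfl

lemma Ue_inv (e : ℤ) : (Ue e)⁻¹ = Ue (-e) := by
  ext : 1
  simp [coe_Ue, adjugate_fin_two]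

lemma Ue_mul_mul_inv_apply_one_zero (e : ℤ) (γ : SL(2, ℤ)) :
    ↑ₘ(Ue e * γ * (Ue e)⁻¹) 1 0 = ↑ₘγ 1 0 + e * (↑ₘγ 0 0 - ↑ₘγ 1 1) - e ^ 2 * ↑ₘγ 0 1 := by
  simp only [Ue_inv, Matrix.SpecialLinearGroup.coe_mul, coe_Ue]
  rw [eta_fin_two ↑ₘγ, mul_fin_two, mul_fin_two]
  simp only [of_apply, cons_val', cons_val_zero, cons_val_one, cons_val_fin_one]
  ring

lemma coe_T_zpow_mul_mul_T_zpow (n k : ℤ) (γ : SL(2, ℤ)) :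
    ↑ₘ(ModularGroup.T ^ n * γ * ModularGroup.T ^ k) =
      !![↑ₘγ 0 0 + n * ↑ₘγ 1 0, k * (↑ₘγ 0 0 + n * ↑ₘγ 1 0) + ↑ₘγ 0 1 + n * ↑ₘγ 1 1;
         ↑ₘγ 1 0, k * ↑ₘγ 1 0 + ↑ₘγ 1 1] := by
  simp only [Matrix.SpecialLinearGroup.coe_mul, ModularGroup.coe_T_zpow]
  conv_lhs => rw [eta_fin_two ↑ₘγ, mul_fin_two, mul_fin_two]
  ring_nf

lemma isCoprime_apply_zero_zero_of_mem_Gamma0 {N : ℕ} {γ : SL(2, ℤ)} (hγ : γ ∈ Gamma0 N) :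
    IsCoprime (↑ₘγ 0 0) (N : ℤ) :=
  (γ.isCoprime_col 0).of_isCoprime_of_dvd_right
    ((ZMod.intCast_zmod_eq_zero_iff_dvd _ _).mp (Gamma0_mem.mp hγ))

lemma Int.exists_dvd_mul_mul_sub_of_isCoprime {a e M t : ℤ} (ha : IsCoprime a M)
    (ht : (Int.gcd e M : ℤ) ∣ t) : ∃ m, M ∣ e * a * m - t := by
  obtain ⟨u, v, huv⟩ := ha
  obtain ⟨k, rfl⟩ := ht
  refine ⟨u * Int.gcdA e M * k, -(e * Int.gcdA e M * k * v + Int.gcdB e M * k), ?_⟩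
  linear_combination e * Int.gcdA e M * k * huv - k * Int.gcd_eq_gcd_ab e M

lemma Ue_mul_T_zpow_mul_mul_T_zpow_mul_inv_mem_Gamma0 {N : ℕ} {e M : ℤ} (hNe : (N : ℤ) = e * M)
    {δ : SL(2, ℤ)} (hδ : δ ∈ Gamma0 N) {n m : ℤ}
    (hm : M ∣ e * ↑ₘδ 0 0 * m - (e * (↑ₘδ 0 1 + n * ↑ₘδ 1 1) + (↑ₘδ 1 1 - ↑ₘδ 0 0))) :
    Ue e * ModularGroup.T ^ n * δ * ModularGroup.T ^ (-m) * (Ue e)⁻¹ ∈ Gamma0 N := by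
  obtain ⟨k, hk⟩ := (ZMod.intCast_zmod_eq_zero_iff_dvd _ _).mp (Gamma0_mem.mp hδ)
  obtain ⟨l, hl⟩ := hm
  have hassoc : Ue e * ModularGroup.T ^ n * δ * ModularGroup.T ^ (-m) * (Ue e)⁻¹ =
      Ue e * (ModularGroup.T ^ n * δ * ModularGroup.T ^ (-m)) * (Ue e)⁻¹ := by
    simp only [mul_assoc]
  rw [hassoc, Gamma0_mem, ZMod.intCast_zmod_eq_zero_iff_dvd, Ue_mul_mul_inv_apply_one_zero,
    coe_T_zpow_mul_mul_T_zpow]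
  simp only [of_apply, cons_val', cons_val_zero, cons_val_one, cons_val_fin_one]
  refine ⟨l + k * (1 + e * n + e * m + e ^ 2 * n * m), ?_⟩
  linear_combination e * hl + (1 + e * n + e * m + e ^ 2 * n * m) * hk - l * hNe

theorem stmt_5_general (N : ℕ) (e : ℕ) (heN : e ∣ N)
    (δ : SL(2, ℤ)) (hδ : δ ∈ Gamma0 N)
    (had : ((δ : Matrix (Fin 2) (Fin 2) ℤ) 0 0)
      ≡ ((δ : Matrix (Fin 2) (Fin 2) ℤ) 1 1) [ZMOD (Nat.gcd e (N / e))]) :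
    ∀ n : ℤ, ∃ n' : ℤ,
      Ue (e : ℤ) * ModularGroup.T ^ n * δ * ModularGroup.T ^ (-n') * (Ue (e : ℤ))⁻¹
        ∈ Gamma0 N := by
  intro n
  have hNe : (N : ℤ) = e * (N / e : ℕ) := by exact_mod_cast (Nat.mul_div_cancel' heN).symm
  have hcop : IsCoprime (↑ₘδ 0 0) ((N / e : ℕ) : ℤ) :=
    (isCoprime_apply_zero_zero_of_mem_Gamma0 hδ).of_isCoprime_of_dvd_right
      (Int.natCast_dvd_natCast.mpr (Nat.div_dvd_of_dvd heN))
  have ht : (Int.gcd e (N / e : ℕ) : ℤ) ∣ e * (↑ₘδ 0 1 + n * ↑ₘδ 1 1) + (↑ₘδ 1 1 - ↑ₘδ 0 0) :=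
    dvd_add (dvd_mul_of_dvd_left (Int.gcd_dvd_left _ _) _) had.dvd
  obtain ⟨m, hm⟩ := Int.exists_dvd_mul_mul_sub_of_isCoprime hcop ht
  exact ⟨m, Ue_mul_T_zpow_mul_mul_T_zpow_mul_inv_mem_Gamma0 hNe hδ hm⟩

/-- Let `N` be a positive integer, `e` a positive divisor of `N`, and `δ = [[a,b],[c,d]] ∈ Γ₀(N)`
with `a ≡ d (mod gcd(e, N/e))`.  Then for every integer `n` there is an integer `n'` such that
`U_e T^n δ T^{-n'} U_e⁻¹ ∈ Γ₀(N)`. -/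
theorem stmt_5 (N : ℕ) (hN : 0 < N) (e : ℕ) (he : 0 < e) (heN : e ∣ N)
    (δ : SL(2, ℤ)) (hδ : δ ∈ Gamma0 N)
    (had : ((δ : Matrix (Fin 2) (Fin 2) ℤ) 0 0)
      ≡ ((δ : Matrix (Fin 2) (Fin 2) ℤ) 1 1) [ZMOD (Nat.gcd e (N / e))]) :
    ∀ n : ℤ, ∃ n' : ℤ,
      Ue (e : ℤ) * ModularGroup.T ^ n * δ * ModularGroup.T ^ (-n') * (Ue (e : ℤ))⁻¹
        ∈ Gamma0 N :=
  stmt_5_general N e heN δ hδ had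
end
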